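/- A finitary endofunctor on Set of the form R(X) = Σ_{n∈ω} Inj((n],X) ⊗_{S_n} R_n preserves wide pullbacks of monomorphisms. -/

import Mathlib

/-! Along a map `f` that is injective on the chosen points, `F f` acts on `[x, r]` by composing
the injection `x` with `f` and leaves `r` alone. Hence `F` preserves injections, and for an
injection `f : X → Y` an element `[z, r]` of `F Y` comes from `F X` exactly when `z` factors through
`f`. For a wide pullback of monos `D`, a compatible family in `F ∘ D` with component `[z, r]` over
the apex therefore has components `[wⱼ, r]` with `wⱼ` a lift of `z`; the lifts assemble into an
injection of `Fin n` into the sections of `D`, which gives the required element, unique because `F`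
preserves the projection to the apex, which is injective. -/

open CategoryTheory Limits Function

/-- A functor `S → Set` on the category of finite cardinals and surjections
(the coefficient data of a semi-analytic functor). -/
structure SurjFunctor : Type 1 where
  obj : ℕ → Type
  map : ∀ {m n : ℕ} (s : Fin m → Fin n), Surjective s → obj m → obj n
  map_id : ∀ {n : ℕ} (r : obj n), map id surjective_id r = r
  map_comp : ∀ {m n k : ℕ} (s : Fin m → Fin n) (hs : Surjective s)
      (t : Fin n → Fin k) (ht : Surjective t) (r : obj m),
      map t ht (map s hs r) = map (t ∘ s) (ht.comp hs) r

/-- The relation `(x⃗ ∘ σ, r) ∼ (x⃗, R(σ)(r))` identifying pairs along the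
diagonal action of the symmetric group `S_n`. -/
def SARel (R : SurjFunctor) (X : Type) (n : ℕ) :
    ((Fin n ↪ X) × R.obj n) → ((Fin n ↪ X) × R.obj n) → Prop :=
  fun p q => ∃ σ : Equiv.Perm (Fin n),
    p.1 = σ.toEmbedding.trans q.1 ∧ q.2 = R.map σ σ.surjective p.2

/-- The value `Σ_{n∈ω} Inj((n],X) ⊗_{S_n} R_n` of the semi-analytic functor at `X`. -/
def SAObj (R : SurjFunctor) (X : Type) : Type :=
  Σ n : ℕ, Quot (SARel R X n)

namespace SurjFunctor

variable (R : SurjFunctor)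

lemma map_congr {m n : ℕ} {s t : Fin m → Fin n} (hs : Surjective s) (ht : Surjective t)
    (h : s = t) (r : R.obj m) : R.map s hs r = R.map t ht r := by
  subst h; rfl

lemma map_symm_map_perm {n : ℕ} (σ : Equiv.Perm (Fin n)) (r : R.obj n) :
    R.map σ.symm σ.symm.surjective (R.map σ σ.surjective r) = r := by
  rw [R.map_comp, R.map_congr _ surjective_id σ.symm_comp_self, R.map_id]

end SurjFunctor

namespace SARel

variable (R : SurjFunctor) (X : Type) (n : ℕ)

lemma equivalence : Equivalence (SARel R X n) where
  refl p := ⟨Equiv.refl _, rfl, (R.map_id p.2).symm⟩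
  symm := by
    rintro p q ⟨σ, hp, hq⟩
    refine ⟨σ.symm, ?_, ?_⟩
    · ext i
      simp [hp]
    · rw [hq, R.map_symm_map_perm]
  trans := by
    rintro p q t ⟨σ, hpq, hq⟩ ⟨τ, hqt, ht⟩
    refine ⟨σ.trans τ, ?_, ?_⟩
    · rw [hpq, hqt]; rfl
    · rw [ht, hq, R.map_comp]; rfl

variable {R X n}

lemma quot_mk_eq_iff {p q : (Fin n ↪ X) × R.obj n} :
    Quot.mk (SARel R X n) p = Quot.mk _ q ↔ SARel R X n p q :=
  Quot.eq.trans (equivalence R X n).eqvGen_iff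

end SARel

lemma SAObj.exists_eq_symm_mk {R : SurjFunctor} {F : Type ⥤ Type}
    (e : ∀ X : Type, F.obj X ≃ SAObj R X) {X : Type} (a : F.obj X) :
    ∃ (n : ℕ) (x : Fin n ↪ X) (r : R.obj n), a = (e X).symm ⟨n, Quot.mk _ (x, r)⟩ := by
  obtain ⟨⟨n, q⟩, rfl⟩ := (e X).symm.surjective a
  induction q using Quot.ind with
  | _ p => exact ⟨n, p.1, p.2, rfl⟩

def IsSAPresentation (R : SurjFunctor) (F : Type ⥤ Type) (e : ∀ X : Type, F.obj X ≃ SAObj R X) :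
    Prop :=
  ∀ (X Y : Type) (f : X → Y) (n : ℕ) (x : Fin n ↪ X) (r : R.obj n)
    (k : ℕ) (z : Fin k ↪ Y) (s : Fin n → Fin k) (hs : Surjective s),
    (∀ i : Fin n, z (s i) = f (x i)) →
      F.map (TypeCat.ofHom f) ((e X).symm ⟨n, Quot.mk _ (x, r)⟩) =
        (e Y).symm ⟨k, Quot.mk _ (z, R.map s hs r)⟩

namespace IsSAPresentation

variable {R : SurjFunctor} {F : Type ⥤ Type} {e : ∀ X : Type, F.obj X ≃ SAObj R X}
  (he : IsSAPresentation R F e)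
include he

lemma map_symm_mk {X Y : Type} (f : X → Y) {n : ℕ} (x : Fin n ↪ X) (hfx : Injective (f ∘ x))
    (r : R.obj n) :
    F.map (TypeCat.ofHom f) ((e X).symm ⟨n, Quot.mk _ (x, r)⟩) =
      (e Y).symm ⟨n, Quot.mk _ (⟨f ∘ x, hfx⟩, r)⟩ := by
  rw [he X Y f n x r n ⟨f ∘ x, hfx⟩ id surjective_id fun _ => rfl, R.map_id]

lemma map_injective {X Y : Type} {f : X → Y} (hf : Injective f) :
    Injective (F.map (TypeCat.ofHom f)) := by
  intro a b hab
  obtain ⟨n, x, r, rfl⟩ := SAObj.exists_eq_symm_mk e a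
  obtain ⟨m, y, t, rfl⟩ := SAObj.exists_eq_symm_mk e b
  rw [he.map_symm_mk f x (hf.comp x.injective), he.map_symm_mk f y (hf.comp y.injective)] at hab
  obtain ⟨rfl, hxy⟩ := Sigma.mk.inj_iff.mp ((e Y).symm.injective hab)
  obtain ⟨σ, hσx, hσr⟩ := SARel.quot_mk_eq_iff.mp (eq_of_heq hxy)
  refine congrArg _ (congrArg _ (Quot.sound ⟨σ, ?_, hσr⟩))
  ext i
  exact hf (DFunLike.congr_fun hσx i)

lemma exists_lift_of_map_eq {X Y : Type} {f : X → Y} (hf : Injective f) {a : F.obj X} {n : ℕ}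
    {z : Fin n ↪ Y} {r : R.obj n}
    (ha : F.map (TypeCat.ofHom f) a = (e Y).symm ⟨n, Quot.mk _ (z, r)⟩) :
    ∃ w : Fin n ↪ X, f ∘ w = z ∧ a = (e X).symm ⟨n, Quot.mk _ (w, r)⟩ := by
  obtain ⟨m, y, t, rfl⟩ := SAObj.exists_eq_symm_mk e a
  rw [he.map_symm_mk f y (hf.comp y.injective)] at ha
  obtain ⟨rfl, hyz⟩ := Sigma.mk.inj_iff.mp ((e Y).symm.injective ha)
  obtain ⟨σ, hσy, hσr⟩ := SARel.quot_mk_eq_iff.mp (eq_of_heq hyz)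
  refine ⟨σ.symm.toEmbedding.trans y, ?_, congrArg _ (congrArg _ (Quot.sound ⟨σ, ?_, hσr⟩))⟩
  · funext i
    simpa using DFunLike.congr_fun hσy (σ.symm i)
  · ext i
    simp

end IsSAPresentation

section WidePullback

variable {J : Type} (D : WidePullbackShape J ⥤ Type)

def sectionOfLifts (z : D.obj none) (w : ∀ j, D.obj (some j))
    (hw : ∀ j, D.map (WidePullbackShape.Hom.term j) (w j) = z) : D.sections :=
  ⟨fun o => Option.rec z w o, by
    rintro _ _ (_ | j)
    · exact D.map_id_apply _ _
    · exact hw j⟩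

lemma sections_ext_of_injective (hD : ∀ j, Injective (D.map (WidePullbackShape.Hom.term j)))
    {s t : D.sections} (h : s.1 none = t.1 none) : s = t := by
  refine Subtype.ext (funext fun o => ?_)
  cases o with
  | none => exact h
  | some j =>
    apply hD j
    rw [s.2 (WidePullbackShape.Hom.term j), t.2 (WidePullbackShape.Hom.term j), h]

end WidePullback

/-- An endofunctor on `Set` of the form `F(X) ≅ Σ_n Inj((n],X) ⊗_n R_n`
preserves wide pullbacks of monomorphisms (limits of families of
monomorphisms with common codomain). -/
theorem semiAnalytic_preserves_wide_pullbacks_of_monos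
    (R : SurjFunctor) (F : Type ⥤ Type)
    (e : ∀ X : Type, F.obj X ≃ SAObj R X)
    (hmap : ∀ (X Y : Type) (f : X → Y) (n : ℕ) (x : Fin n ↪ X) (r : R.obj n)
      (k : ℕ) (z : Fin k ↪ Y) (s : Fin n → Fin k) (hs : Surjective s),
      (∀ i : Fin n, z (s i) = f (x i)) →
      F.map (TypeCat.ofHom f) ((e X).symm ⟨n, Quot.mk _ (x, r)⟩) =
        (e Y).symm ⟨k, Quot.mk _ (z, R.map s hs r)⟩) :
    ∀ (J : Type) (D : WidePullbackShape J ⥤ Type),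
      (∀ j : J, Mono (D.map (WidePullbackShape.Hom.term j))) →
      PreservesLimit D F := by
  intro J D hmono
  have he : IsSAPresentation R F e := hmap
  have hD j : Injective (D.map (WidePullbackShape.Hom.term j)) :=
    (mono_iff_injective _).1 (hmono j)
  refine preservesLimit_of_preserves_limit_cone (Types.limitConeIsLimit.{0, 0} D)
    ((Types.isLimit_iff _).2 fun u hu => ?_).some
  obtain ⟨n, z, r, hz⟩ := SAObj.exists_eq_symm_mk e (u none)
  choose w hwz hw using fun j => he.exists_lift_of_map_eq (hD j) ((hu (.term j)).trans hz)
  let sec : Fin n ↪ D.sections :=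
    ⟨fun i => sectionOfLifts D (z i) (fun j => w j i) (fun j => congrFun (hwz j) i),
      fun i i' h => z.injective (congrArg (·.1 none) h)⟩
  have hsec o : F.map ((Types.limitCone D).π.app o) ((e D.sections).symm ⟨n, Quot.mk _ (sec, r)⟩)
      = u o := by
    cases o with
    | none =>
      exact (he.map_symm_mk (fun s : D.sections => s.1 none) sec z.injective r).trans hz.symm
    | some j =>
      exact (he.map_symm_mk (fun s : D.sections => s.1 (some j)) sec (w j).injective r).trans
        (hw j).symm
  exact ⟨_, hsec, fun x hx => he.map_injective (f := fun s : D.sections => s.1 none)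
    (fun _ _ => sections_ext_of_injective D hD) ((hx none).trans (hsec none).symm)⟩
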